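/- Let π = (n_1,…,n_m) (m ≥ 2) be a partition of n and O, O' ∈ O(P_m) with O' weak equivalent to O. Let J_O = R_{i_{T−1}j_{T−1}}···R_{i_1j_1}R_{i_0j_0} ∈ J_O be a block Jacobi operator and let J_{O'} be the product of the same block Jacobi annihilators arranged according to O' (i.e., J_{O'} is obtained from the product defining J_O by following the chain connecting O to O': interchanging two adjacent factors whenever the corresponding adjacent pairs are interchanged by an admissible transposition, and cyclically permuting the factors whenever a shift equivalence is applied). Then spr(J_O) = spr(J_{O'}), where spr denotes the spectral radius. Moreover, if O ~ O' (equivalent, connected by admissible transpositions only), then J_O = J_{O'}. -/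

import Mathlib

namespace BlockJacobi

open scoped BigOperators

attribute [local instance] Classical.propDecidable

noncomputable section

/-- Offset (starting index) of block `r` for the partition `c`. -/
def off (c : ℕ → ℕ) (r : ℕ) : ℕ := ∑ k ∈ Finset.range r, c k

/-- `t` belongs to block `r`. -/
def inBlk (c : ℕ → ℕ) (r t : ℕ) : Prop := off c r ≤ t ∧ t < off c r + c r

/-- `s` and `t` belong to the same block (among the first `m` blocks). -/
def sameBlk (c : ℕ → ℕ) (m s t : ℕ) : Prop := ∃ r, r < m ∧ inBlk c r s ∧ inBlk c r t

/-- `t` belongs to the pivot zone: block `i` or block `j`. -/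
def inPiv (c : ℕ → ℕ) (i j t : ℕ) : Prop := inBlk c i t ∨ inBlk c j t

/-- `(c, m)` is a partition of `n` into `m` blocks (0-based blocks `0,…,m-1`). -/
def IsPartition (n m : ℕ) (c : ℕ → ℕ) : Prop :=
  2 ≤ m ∧ (∀ i < m, 1 ≤ c i) ∧ ∑ i ∈ Finset.range m, c i = n

/-- elementary block matrix with (0-based) pivot pair `(i,j)`. -/
def IsElem {n : ℕ} (c : ℕ → ℕ) (i j : ℕ) (U : Matrix (Fin n) (Fin n) ℝ) : Prop :=
  ∀ s t : Fin n, ¬(inPiv c i j (s : ℕ) ∧ inPiv c i j (t : ℕ)) →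
    U s t = if s = t then 1 else 0

/-- orthogonality. -/
def Orth {n : ℕ} (U : Matrix (Fin n) (Fin n) ℝ) : Prop := U.transpose * U = 1

/-- Euclidean norm of a vector. -/
def enorm {ι : Type*} [Fintype ι] (x : ι → ℝ) : ℝ := Real.sqrt (∑ i, x i ^ 2)

/-- smallest singular value of the `(r,r)` diagonal block of `U`. -/
def sigmaMinBlk {n : ℕ} (c : ℕ → ℕ) (r : ℕ) (U : Matrix (Fin n) (Fin n) ℝ) : ℝ :=
  sInf { v : ℝ | ∃ x : Fin n → ℝ,
    (∀ t : Fin n, ¬ inBlk c r (t : ℕ) → x t = 0) ∧ enorm x = 1 ∧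
    enorm (fun t : Fin n => if inBlk c r (t : ℕ) then U.mulVec x t else 0) = v }

/-- the constant `γ_{ij}` of the UBC class. -/
def gammaUBC (c : ℕ → ℕ) (i j : ℕ) : ℝ :=
  3 / Real.sqrt (((4 : ℝ) ^ c i + 6 * (c j : ℝ) - 1) * ((c j : ℝ) + 1))

/-- `U` is in the UBC class with pivot pair `(i,j)`: block structure given by `cs`,
`γ`-bound computed from the partition `cg`. -/
def IsUBC2 {n : ℕ} (cs cg : ℕ → ℕ) (ρ : ℝ) (i j : ℕ) (U : Matrix (Fin n) (Fin n) ℝ) : Prop :=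
  IsElem cs i j U ∧ Orth U ∧ sigmaMinBlk cs i U = sigmaMinBlk cs j U ∧
    ρ * gammaUBC cg i j ≤ sigmaMinBlk cs i U

/-- `U ∈ UBC_π(ρ)` with pivot pair `(i,j)`. -/
def IsUBC {n : ℕ} (c : ℕ → ℕ) (ρ : ℝ) (i j : ℕ) (U : Matrix (Fin n) (Fin n) ℝ) : Prop :=
  IsUBC2 c c ρ i j U

/-- the `(i,j)` pivot submatrix of `A` is diagonal. -/
def PivDiag {n : ℕ} (c : ℕ → ℕ) (i j : ℕ) (A : Matrix (Fin n) (Fin n) ℝ) : Prop :=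
  ∀ s t : Fin n, s ≠ t → inPiv c i j (s : ℕ) → inPiv c i j (t : ℕ) → A s t = 0

/-- square of the off-norm `S(A)`. -/
def offSq {n : ℕ} (A : Matrix (Fin n) (Fin n) ℝ) : ℝ :=
  ∑ s : Fin n, ∑ t : Fin n, if (s : ℕ) < (t : ℕ) then A s t ^ 2 else 0

/-- square of the off-norm of the `(i,j)` pivot submatrix of `A`. -/
def offSqPiv {n : ℕ} (c : ℕ → ℕ) (i j : ℕ) (A : Matrix (Fin n) (Fin n) ℝ) : ℝ :=
  ∑ s : Fin n, ∑ t : Fin n,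
    if (s : ℕ) < (t : ℕ) ∧ inPiv c i j (s : ℕ) ∧ inPiv c i j (t : ℕ) then A s t ^ 2 else 0

/-- Frobenius norm. -/
def frob {n : ℕ} (A : Matrix (Fin n) (Fin n) ℝ) : ℝ :=
  Real.sqrt (∑ s : Fin n, ∑ t : Fin n, A s t ^ 2)

/-- One sweep of the block Jacobi method along the pivot list `L`; block structure from
`cs`, UBC bound computed from the partition `cg`. -/
def Sweep2 {n : ℕ} (cs cg : ℕ → ℕ) (ρ : ℝ) (L : List (ℕ × ℕ))
    (A A' : Matrix (Fin n) (Fin n) ℝ) : Prop :=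
  ∃ B : ℕ → Matrix (Fin n) (Fin n) ℝ,
    B 0 = A ∧ B L.length = A' ∧
    ∀ (k : ℕ) (hk : k < L.length),
      ∃ U : Matrix (Fin n) (Fin n) ℝ,
        IsUBC2 cs cg ρ (L.get ⟨k, hk⟩).1 (L.get ⟨k, hk⟩).2 U ∧
        B (k + 1) = U.transpose * B k * U ∧
        PivDiag cs (L.get ⟨k, hk⟩).1 (L.get ⟨k, hk⟩).2 (B (k + 1))

/-- One sweep of the block Jacobi method with `UBC_π(ρ)` transformations. -/
def Sweep {n : ℕ} (c : ℕ → ℕ) (ρ : ℝ) (L : List (ℕ × ℕ))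
    (A A' : Matrix (Fin n) (Fin n) ℝ) : Prop :=
  Sweep2 c c ρ L A A'

/-- `L ∈ O(P_m)` (0-based pairs). -/
def SeqOn (m : ℕ) (L : List (ℕ × ℕ)) : Prop :=
  (∀ p ∈ L, p.1 < p.2 ∧ p.2 < m) ∧ ∀ i j : ℕ, i < j → j < m → (i, j) ∈ L

/-- `L ∈ O(S)` for `S ⊆ P_m`. -/
def SeqOnSet (S : Set (ℕ × ℕ)) (L : List (ℕ × ℕ)) : Prop :=
  (∀ p ∈ L, p ∈ S) ∧ ∀ p ∈ S, p ∈ L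

/-- the class `B_c^(m)` of column-wise orderings (0-based). -/
def memBc (m : ℕ) (L : List (ℕ × ℕ)) : Prop :=
  ∃ τ : ℕ → ℕ → ℕ,
    (∀ j, Set.BijOn (τ j) (Set.Iio j) (Set.Iio j)) ∧
    L = (List.range' 1 (m - 1)).flatMap fun j => (List.range j).map fun a => (τ j a, j)

/-- the class `B_r^(m)` of row-wise orderings (0-based). -/
def memBr (m : ℕ) (L : List (ℕ × ℕ)) : Prop :=
  ∃ σ : ℕ → ℕ → ℕ,
    (∀ i, Set.BijOn (σ i) (Set.Ico (i + 1) m) (Set.Ico (i + 1) m)) ∧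
    L = ((List.range (m - 1)).reverse).flatMap fun i =>
      (List.range' (i + 1) (m - 1 - i)).map fun b => (i, σ i b)

/-- the class `B_sp^(m)` of serial orderings with permutations. -/
def memBsp (m : ℕ) (L : List (ℕ × ℕ)) : Prop :=
  memBc m L ∨ memBc m L.reverse ∨ memBr m L ∨ memBr m L.reverse

/-- the quasi-cyclic class `B̄_c^(m)`. -/
def memBcQ (m : ℕ) (L : List (ℕ × ℕ)) : Prop :=
  ∃ (τ : ℕ → ℕ → ℕ) (E : ℕ → List (ℕ × ℕ)),
    (∀ j, Set.BijOn (τ j) (Set.Iio j) (Set.Iio j)) ∧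
    (∀ j, ∀ p ∈ E j, p.1 < p.2 ∧ p.2 ≤ j) ∧
    L = (List.range' 1 (m - 1)).flatMap fun j =>
      ((List.range j).map fun a => (τ j a, j)) ++ (if j = 1 then [] else E j)

/-- one admissible transposition (on lists of `α`'s carrying pairs via `pr`). -/
def AdjSwapG {α : Type*} (pr : α → ℕ × ℕ) (L L' : List α) : Prop :=
  ∃ (l₁ l₂ : List α) (a b : α),
    ({(pr a).1, (pr a).2} ∩ {(pr b).1, (pr b).2} : Set ℕ) = ∅ ∧
    L = l₁ ++ a :: b :: l₂ ∧ L' = l₁ ++ b :: a :: l₂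

/-- equivalence (finitely many admissible transpositions). -/
def EquivG {α : Type*} (pr : α → ℕ × ℕ) : List α → List α → Prop :=
  Relation.ReflTransGen (AdjSwapG pr)

/-- shift-equivalence. -/
def ShiftG {α : Type*} (L L' : List α) : Prop :=
  ∃ l₁ l₂ : List α, L = l₁ ++ l₂ ∧ L' = l₂ ++ l₁

/-- weak equivalence. -/
def WeakG {α : Type*} (pr : α → ℕ × ℕ) : List α → List α → Prop :=
  Relation.ReflTransGen fun X Y => EquivG pr X Y ∨ ShiftG X Y

/-- equivalence of pivot sequences. -/
def PEquivL : List (ℕ × ℕ) → List (ℕ × ℕ) → Prop := EquivG id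

/-- shift-equivalence of pivot sequences. -/
def ShiftEq : List (ℕ × ℕ) → List (ℕ × ℕ) → Prop := ShiftG

/-- weak equivalence of pivot sequences. -/
def WeakEq : List (ℕ × ℕ) → List (ℕ × ℕ) → Prop := WeakG id

/-- weak equivalence realized by a chain containing exactly `d` shift-equivalent
adjacent pairs (all other adjacent pairs being equivalent). -/
def WeakChainD (d : ℕ) (L L' : List (ℕ × ℕ)) : Prop :=
  ∃ (r : ℕ) (cs : ℕ → List (ℕ × ℕ)) (s : Finset ℕ),
    cs 0 = L ∧ cs r = L' ∧ s.card = d ∧ (∀ k ∈ s, k < r) ∧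
    ∀ k < r, if k ∈ s then ShiftEq (cs k) (cs (k + 1)) else PEquivL (cs k) (cs (k + 1))

/-- `q` is a permutation of `{0,…,m-1}`. -/
def IsPermOn (m : ℕ) (q : ℕ → ℕ) : Prop := Set.BijOn q (Set.Iio m) (Set.Iio m)

/-- `O(q)`: apply a permutation to all pairs of the sequence. -/
def pApply (q : ℕ → ℕ) (L : List (ℕ × ℕ)) : List (ℕ × ℕ) :=
  L.map fun p => if q p.1 < q p.2 then (q p.1, q p.2) else (q p.2, q p.1)

/-- `compSeq q t = q_t ∘ q_{t-1} ∘ ⋯ ∘ q_1`. -/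
def compSeq (q : ℕ → ℕ → ℕ) : ℕ → ℕ → ℕ
  | 0 => id
  | t + 1 => q (t + 1) ∘ compSeq q t

/-- the class `B_spg^(m)`. -/
def memBspg (m : ℕ) (L : List (ℕ × ℕ)) : Prop :=
  ∃ L' L'' : List (ℕ × ℕ), memBsp m L'' ∧
    ((∃ q, IsPermOn m q ∧ L' = pApply q L) ∧ PEquivL L' L'' ∨
      PEquivL L L' ∧ ∃ q, IsPermOn m q ∧ L'' = pApply q L')

/-- the class `B_sg^(m)` of generalized serial orderings. -/
def memBsg (m : ℕ) (L : List (ℕ × ℕ)) : Prop :=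
  ∃ L' L'' : List (ℕ × ℕ), memBsp m L'' ∧
    ((∃ q, IsPermOn m q ∧ L' = pApply q L) ∧ WeakEq L' L'' ∨
      WeakEq L L' ∧ ∃ q, IsPermOn m q ∧ L'' = pApply q L')

/-- index set of the entries of the off-diagonal blocks in the upper triangle;
it has cardinality `K`. -/
def OffI (n m : ℕ) (c : ℕ → ℕ) : Type :=
  { p : Fin n × Fin n // (p.1 : ℕ) < (p.2 : ℕ) ∧ ¬ sameBlk c m (p.1 : ℕ) (p.2 : ℕ) }

instance (n m : ℕ) (c : ℕ → ℕ) : Fintype (OffI n m c) := by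
  unfold OffI; exact Subtype.fintype _

instance (n m : ℕ) (c : ℕ → ℕ) : DecidableEq (OffI n m c) := Classical.decEq _

/-- `vec_{π,0}⁻¹` : the symmetric matrix with zero diagonal blocks built from a vector. -/
def symOf {n m : ℕ} {c : ℕ → ℕ} (a : OffI n m c → ℝ) : Matrix (Fin n) (Fin n) ℝ :=
  fun s t =>
    if h : (s : ℕ) < (t : ℕ) ∧ ¬ sameBlk c m (s : ℕ) (t : ℕ) then a ⟨(s, t), h⟩
    else if h' : (t : ℕ) < (s : ℕ) ∧ ¬ sameBlk c m (t : ℕ) (s : ℕ) then a ⟨(t, s), h'⟩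
    else 0

/-- `N_{ij}` : set the pivot submatrix to zero. -/
def nij {n : ℕ} (c : ℕ → ℕ) (i j : ℕ) (M : Matrix (Fin n) (Fin n) ℝ) :
    Matrix (Fin n) (Fin n) ℝ :=
  fun s t => if inPiv c i j (s : ℕ) ∧ inPiv c i j (t : ℕ) then 0 else M s t

/-- the block Jacobi annihilator `R_{ij}(Û)` (as a `K×K` matrix), parametrized by the
full elementary block matrix `U` with pivot pair `(i,j)` and pivot submatrix `Û`. -/
def annih (n m : ℕ) (c : ℕ → ℕ) (i j : ℕ) (U : Matrix (Fin n) (Fin n) ℝ) :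
    Matrix (OffI n m c) (OffI n m c) ℝ :=
  fun p q => nij c i j (U.transpose * symOf (Pi.single q (1 : ℝ)) * U) p.1.1 p.1.2

/-- the class `I_{ij}` of block Jacobi annihilators. -/
def Iij (n m : ℕ) (c : ℕ → ℕ) (i j : ℕ) : Set (Matrix (OffI n m c) (OffI n m c) ℝ) :=
  { R | ∃ U : Matrix (Fin n) (Fin n) ℝ, IsElem c i j U ∧ Orth U ∧ R = annih n m c i j U }

/-- the class `I_{ij}^{UBC(ρ)}`. -/
def IijUBC (n m : ℕ) (c : ℕ → ℕ) (ρ : ℝ) (i j : ℕ) :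
    Set (Matrix (OffI n m c) (OffI n m c) ℝ) :=
  { R | ∃ U : Matrix (Fin n) (Fin n) ℝ, IsUBC c ρ i j U ∧ R = annih n m c i j U }

/-- the class `J_O^{UBC_π(ρ)}` of block Jacobi operators. -/
def JopUBC (n m : ℕ) (c : ℕ → ℕ) (ρ : ℝ) (L : List (ℕ × ℕ)) :
    Set (Matrix (OffI n m c) (OffI n m c) ℝ) :=
  { J | ∃ R : ℕ → Matrix (OffI n m c) (OffI n m c) ℝ,
      (∀ (k : ℕ) (hk : k < L.length),
        R k ∈ IijUBC n m c ρ (L.get ⟨k, hk⟩).1 (L.get ⟨k, hk⟩).2) ∧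
      J = (((List.range L.length).reverse).map R).prod }

/-- spectral norm (operator 2-norm). -/
def specNorm {ι : Type*} [Fintype ι] (M : Matrix ι ι ℝ) : ℝ :=
  sSup { v : ℝ | ∃ x : ι → ℝ, enorm x = 1 ∧ enorm (M.mulVec x) = v }

/-- spectral radius. -/
def specRad {ι : Type*} [Fintype ι] (M : Matrix ι ι ℝ) : ℝ :=
  sSup { v : ℝ | ∃ (μ : ℂ) (x : ι → ℂ), x ≠ 0 ∧
    (M.map (fun r : ℝ => (r : ℂ))).mulVec x = μ • x ∧ v = ‖μ‖ }

/-- product `R_{T-1} ⋯ R_1 R_0` of a decorated pivot list. -/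
def prodD {n m : ℕ} {c : ℕ → ℕ}
    (L : List ((ℕ × ℕ) × Matrix (OffI n m c) (OffI n m c) ℝ)) :
    Matrix (OffI n m c) (OffI n m c) ℝ :=
  ((L.map Prod.snd).reverse).prod

/-- plane (Givens) rotation in the `(i,j)` coordinate plane. -/
def rotM (n : ℕ) (i j : ℕ) (φ : ℝ) : Matrix (Fin n) (Fin n) ℝ :=
  fun s t =>
    if (s : ℕ) = i ∧ (t : ℕ) = i then Real.cos φ
    else if (s : ℕ) = j ∧ (t : ℕ) = j then Real.cos φ
    else if (s : ℕ) = i ∧ (t : ℕ) = j then - Real.sin φ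
    else if (s : ℕ) = j ∧ (t : ℕ) = i then Real.sin φ
    else if s = t then 1 else 0

/-- One sweep of the scalar (element-wise) cyclic Jacobi method with rotation
angles in `[-π/4, π/4]`. -/
def ScalarSweep {n : ℕ} (L : List (ℕ × ℕ)) (A A' : Matrix (Fin n) (Fin n) ℝ) : Prop :=
  ∃ (B : ℕ → Matrix (Fin n) (Fin n) ℝ) (φ : ℕ → ℝ),
    B 0 = A ∧ B L.length = A' ∧
    ∀ (k : ℕ) (hk : k < L.length),
      |φ k| ≤ Real.pi / 4 ∧
      B (k + 1) =
        (rotM n (L.get ⟨k, hk⟩).1 (L.get ⟨k, hk⟩).2 (φ k)).transpose * B k *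
          rotM n (L.get ⟨k, hk⟩).1 (L.get ⟨k, hk⟩).2 (φ k) ∧
      ∀ s t : Fin n, (s : ℕ) = (L.get ⟨k, hk⟩).1 → (t : ℕ) = (L.get ⟨k, hk⟩).2 →
        B (k + 1) s t = 0

/-- `k` concatenated copies of a list. -/
def iterList {α : Type*} : ℕ → List α → List α
  | 0, _ => []
  | k + 1, L => L ++ iterList k L


/-!
An elementary block matrix differs from the identity only inside its pivot zone, so for disjoint
pivot pairs the maps `M ↦ N_ij(Uᵀ M U)` and `M ↦ N_kl(Vᵀ M V)` commute on all matrices: this is a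
ring identity in the two orthogonal corners cut out by the diagonal projections onto the zones.
The annihilator `R_ij(Û)` is such a map read through `vec_π`, and the round trip
`vec_{π,0}⁻¹ ∘ vec_π` between two factors is harmless because `N_kl(Vᵀ S V)` is again symmetric
with zero diagonal blocks whenever `S` is. Hence admissible transpositions do not change the
product. A shift replaces `XY` by `YX`, which has the same characteristic polynomial and so the
same spectral radius.
-/

open Matrix

/-- After expansion, every monomial that mixes the two corners contains `p * q` or `q * p`. -/
theorem corner_sandwich_comm {R : Type*} [Ring R] {p q u u' v v' : R}
    (hpq : p * q = 0) (hqp : q * p = 0)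
    (hu : p * (u - 1) * p = u - 1) (hu' : p * (u' - 1) * p = u' - 1)
    (hv : q * (v - 1) * q = v - 1) (hv' : q * (v' - 1) * q = v' - 1) (x : R) :
    u' * (v' * x * v - q * (v' * x * v) * q) * u -
        p * (u' * (v' * x * v - q * (v' * x * v) * q) * u) * p =
      v' * (u' * x * u - p * (u' * x * u) * p) * v -
        q * (v' * (u' * x * u - p * (u' * x * u) * p) * v) * q := by
  obtain ⟨a, rfl⟩ : ∃ a, u = 1 + p * a * p := ⟨u - 1, by rw [hu]; abel⟩
  obtain ⟨a', rfl⟩ : ∃ a, u' = 1 + p * a * p := ⟨u' - 1, by rw [hu']; abel⟩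
  obtain ⟨b, rfl⟩ : ∃ b, v = 1 + q * b * q := ⟨v - 1, by rw [hv]; abel⟩
  obtain ⟨b', rfl⟩ : ∃ b, v' = 1 + q * b * q := ⟨v' - 1, by rw [hv']; abel⟩
  have hpq' : ∀ y, p * (q * y) = 0 := fun y => by rw [← mul_assoc, hpq, zero_mul]
  have hqp' : ∀ y, q * (p * y) = 0 := fun y => by rw [← mul_assoc, hqp, zero_mul]
  simp only [mul_add, add_mul, mul_sub, sub_mul, one_mul, mul_one, mul_assoc, hpq, hqp, hpq',
    hqp', mul_zero, add_zero, sub_zero]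
  abel

section Blocks

variable {n m : ℕ} {c : ℕ → ℕ}

lemma off_succ (c : ℕ → ℕ) (r : ℕ) : off c (r + 1) = off c r + c r :=
  Finset.sum_range_succ _ _

lemma off_mono (c : ℕ → ℕ) : Monotone (off c) :=
  fun _ _ h => Finset.sum_le_sum_of_subset (Finset.range_subset_range.2 h)

lemma inBlk_unique {r r' t : ℕ} (h : inBlk c r t) (h' : inBlk c r' t) : r = r' := by
  by_contra hne
  wlog hlt : r < r' generalizing r r'
  · exact this h' h (Ne.symm hne) (by omega)
  have := off_mono c (Nat.succ_le_of_lt hlt)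
  rw [off_succ] at this
  unfold inBlk at h h'
  omega

lemma not_inPiv_and_inPiv {i j k l : ℕ} (hd : ({i, j} ∩ {k, l} : Set ℕ) = ∅) (t : ℕ) :
    ¬ (inPiv c i j t ∧ inPiv c k l t) := by
  have key : ∀ r ∈ ({i, j} : Set ℕ), ∀ r' ∈ ({k, l} : Set ℕ), inBlk c r t → ¬ inBlk c r' t :=
    fun r hr r' hr' hb hb' => hd.subset ⟨hr, inBlk_unique hb hb' ▸ hr'⟩
  rintro ⟨h₁ | h₁, h₂ | h₂⟩ <;> exact key _ (by simp) _ (by simp) h₁ h₂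

lemma sameBlk.symm {s t : ℕ} (h : sameBlk c m s t) : sameBlk c m t s :=
  let ⟨r, hr, hs, ht⟩ := h
  ⟨r, hr, ht, hs⟩

lemma inPiv_of_sameBlk {i j s t : ℕ} (hst : sameBlk c m s t) (hs : inPiv c i j s) :
    inPiv c i j t := by
  obtain ⟨r, -, hrs, hrt⟩ := hst
  rcases hs with hs | hs
  · exact Or.inl (inBlk_unique hrs hs ▸ hrt)
  · exact Or.inr (inBlk_unique hrs hs ▸ hrt)

end Blocks

section PivotZone

variable {n : ℕ} {c : ℕ → ℕ}

def pivProj (n : ℕ) (c : ℕ → ℕ) (i j : ℕ) : Matrix (Fin n) (Fin n) ℝ :=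
  diagonal fun s => if inPiv c i j s then 1 else 0

lemma pivProj_mul_pivProj_eq_zero {i j k l : ℕ} (hd : ∀ t, ¬ (inPiv c i j t ∧ inPiv c k l t)) :
    pivProj n c i j * pivProj n c k l = 0 := by
  rw [pivProj, pivProj, diagonal_mul_diagonal, ← diagonal_zero]
  congr 1
  funext s
  by_cases h : inPiv c i j s
  · simp [h, show ¬ inPiv c k l s from fun h' => hd s ⟨h, h'⟩]
  · simp [h]

lemma nij_eq_sub (i j : ℕ) (X : Matrix (Fin n) (Fin n) ℝ) :
    nij c i j X = X - pivProj n c i j * X * pivProj n c i j := by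
  ext s t
  by_cases hs : inPiv c i j s <;> by_cases ht : inPiv c i j t <;>
    simp [nij, pivProj, hs, ht]

lemma IsElem.transpose {i j : ℕ} {U : Matrix (Fin n) (Fin n) ℝ} (hU : IsElem c i j U) :
    IsElem c i j Uᵀ := by
  intro s t hst
  rw [transpose_apply, hU t s (fun h => hst h.symm)]
  simp only [@eq_comm _ t s]

lemma IsElem.pivProj_mul_sub_one_mul {i j : ℕ} {U : Matrix (Fin n) (Fin n) ℝ}
    (hU : IsElem c i j U) :
    pivProj n c i j * (U - 1) * pivProj n c i j = U - 1 := by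
  ext s t
  by_cases hst : inPiv c i j s ∧ inPiv c i j t
  · simp [pivProj, hst]
  · have := hU s t hst
    by_cases hs : inPiv c i j s <;> simp_all [pivProj, one_apply]

lemma IsElem.apply_of_not_inPiv {i j : ℕ} {U : Matrix (Fin n) (Fin n) ℝ} (hU : IsElem c i j U)
    {t : Fin n} (ht : ¬ inPiv c i j t) (r : Fin n) : U r t = if r = t then 1 else 0 :=
  hU r t fun h => ht h.2

lemma IsElem.conj_apply {i j : ℕ} {U : Matrix (Fin n) (Fin n) ℝ} (hU : IsElem c i j U)
    (M : Matrix (Fin n) (Fin n) ℝ) {s t : Fin n} (hs : ¬ inPiv c i j s)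
    (ht : ¬ inPiv c i j t) : (Uᵀ * M * U) s t = M s t := by
  simp [mul_apply, hU.apply_of_not_inPiv hs, hU.apply_of_not_inPiv ht]

end PivotZone

section Annihilator

variable {n m : ℕ} {c : ℕ → ℕ}

def conjNij (c : ℕ → ℕ) (i j : ℕ) (U : Matrix (Fin n) (Fin n) ℝ) :
    Matrix (Fin n) (Fin n) ℝ →ₗ[ℝ] Matrix (Fin n) (Fin n) ℝ where
  toFun M := nij c i j (Uᵀ * M * U)
  map_add' M N := by simp only [nij_eq_sub, Matrix.mul_add, Matrix.add_mul]; abel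
  map_smul' a M := by simp [nij_eq_sub, smul_sub]

lemma conjNij_apply (i j : ℕ) (U M : Matrix (Fin n) (Fin n) ℝ) :
    conjNij c i j U M = nij c i j (Uᵀ * M * U) := rfl

lemma conjNij_comm {i j k l : ℕ} {U V : Matrix (Fin n) (Fin n) ℝ}
    (hd : ∀ t, ¬ (inPiv c i j t ∧ inPiv c k l t)) (hU : IsElem c i j U) (hV : IsElem c k l V) :
    conjNij c i j U ∘ₗ conjNij c k l V = conjNij c k l V ∘ₗ conjNij c i j U := by
  ext1 M
  simpa only [LinearMap.comp_apply, conjNij_apply, nij_eq_sub, Matrix.mul_assoc] using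
    corner_sandwich_comm (pivProj_mul_pivProj_eq_zero hd)
      (pivProj_mul_pivProj_eq_zero fun t h => hd t h.symm)
      hU.pivProj_mul_sub_one_mul hU.transpose.pivProj_mul_sub_one_mul
      hV.pivProj_mul_sub_one_mul hV.transpose.pivProj_mul_sub_one_mul M

lemma conjNij_transpose (i j : ℕ) (U M : Matrix (Fin n) (Fin n) ℝ) :
    (conjNij c i j U M)ᵀ = conjNij c i j U Mᵀ := by
  have hconj : (Uᵀ * M * U)ᵀ = Uᵀ * Mᵀ * U := by
    simp only [transpose_mul, transpose_transpose, Matrix.mul_assoc]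
  ext s t
  rw [conjNij_apply, conjNij_apply, ← hconj]
  simp only [nij, transpose_apply, and_comm]

def offVec (n m : ℕ) (c : ℕ → ℕ) : Matrix (Fin n) (Fin n) ℝ →ₗ[ℝ] OffI n m c → ℝ where
  toFun X p := X p.1.1 p.1.2
  map_add' _ _ := rfl
  map_smul' _ _ := rfl

def symOfLin : (OffI n m c → ℝ) →ₗ[ℝ] Matrix (Fin n) (Fin n) ℝ where
  toFun := symOf
  map_add' a b := by
    ext s t
    rw [Matrix.add_apply]
    unfold symOf
    split_ifs <;> first | rfl | simp
  map_smul' r a := by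
    ext s t
    rw [Matrix.smul_apply]
    unfold symOf
    split_ifs <;> first | rfl | simp

@[simp] lemma symOfLin_apply (a : OffI n m c → ℝ) : symOfLin a = symOf a := rfl

lemma annih_eq_toMatrix' (i j : ℕ) (U : Matrix (Fin n) (Fin n) ℝ) :
    annih n m c i j U = LinearMap.toMatrix' (offVec n m c ∘ₗ conjNij c i j U ∘ₗ symOfLin) := by
  ext p q
  rfl

lemma symOf_transpose (a : OffI n m c → ℝ) : (symOf a)ᵀ = symOf a := by
  ext s t
  simp only [transpose_apply, symOf]
  split_ifs <;> first | rfl | omega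

lemma symOf_apply_eq_zero (a : OffI n m c → ℝ) {s t : Fin n}
    (hst : s = t ∨ sameBlk c m s t) : symOf a s t = 0 := by
  rcases hst with rfl | hst
  · simp [symOf]
  · simp [symOf, hst, hst.symm]

lemma symOf_offVec {X : Matrix (Fin n) (Fin n) ℝ} (hsym : Xᵀ = X)
    (h0 : ∀ s t : Fin n, s = t ∨ sameBlk c m s t → X s t = 0) :
    symOf (offVec n m c X) = X := by
  ext s t
  simp only [symOf]
  split_ifs with h h'
  · rfl
  · exact congrFun (congrFun hsym s) t
  · refine (h0 s t ?_).symm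
    rcases lt_trichotomy (s : ℕ) t with hlt | heq | hgt
    · exact Or.inr (by simpa [hlt] using h)
    · exact Or.inl (Fin.ext heq)
    · exact Or.inr (sameBlk.symm (by simpa [hgt] using h'))

lemma conjNij_symOf_apply_eq_zero {k l : ℕ} {V : Matrix (Fin n) (Fin n) ℝ}
    (hV : IsElem c k l V) (a : OffI n m c → ℝ) {s t : Fin n}
    (hst : s = t ∨ sameBlk c m s t) : conjNij c k l V (symOf a) s t = 0 := by
  by_cases hpiv : inPiv c k l s ∨ inPiv c k l t
  · have hboth : inPiv c k l s ∧ inPiv c k l t := by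
      rcases hst with rfl | hst
      · simpa using hpiv
      · exact hpiv.elim (fun hs => ⟨hs, inPiv_of_sameBlk hst hs⟩)
          (fun ht => ⟨inPiv_of_sameBlk hst.symm ht, ht⟩)
    simp [conjNij_apply, nij, hboth]
  · rw [not_or] at hpiv
    rw [conjNij_apply, nij, if_neg (fun h => hpiv.1 h.1), hV.conj_apply _ hpiv.1 hpiv.2,
      symOf_apply_eq_zero a hst]

lemma annih_mul_annih {i j k l : ℕ} (U : Matrix (Fin n) (Fin n) ℝ)
    {V : Matrix (Fin n) (Fin n) ℝ} (hV : IsElem c k l V) :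
    annih n m c i j U * annih n m c k l V =
      LinearMap.toMatrix' (offVec n m c ∘ₗ (conjNij c i j U ∘ₗ conjNij c k l V) ∘ₗ symOfLin) := by
  rw [annih_eq_toMatrix', annih_eq_toMatrix', ← LinearMap.toMatrix'_comp]
  congr 1
  refine LinearMap.ext fun a => ?_
  simp only [LinearMap.comp_apply, symOfLin_apply]
  congr 2
  exact symOf_offVec (by rw [conjNij_transpose, symOf_transpose])
    (fun s t => conjNij_symOf_apply_eq_zero hV a)

lemma annih_comm {i j k l : ℕ} {U V : Matrix (Fin n) (Fin n) ℝ}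
    (hd : ∀ t, ¬ (inPiv c i j t ∧ inPiv c k l t)) (hU : IsElem c i j U) (hV : IsElem c k l V) :
    annih n m c i j U * annih n m c k l V = annih n m c k l V * annih n m c i j U := by
  rw [annih_mul_annih U hV, annih_mul_annih V hU, conjNij_comm hd hU hV]

end Annihilator

section SpectralRadius

variable {ι : Type*} [Fintype ι]

lemma exists_eigenvector_iff_isRoot_charpoly [DecidableEq ι] (M : Matrix ι ι ℂ) (μ : ℂ) :
    (∃ x : ι → ℂ, x ≠ 0 ∧ M *ᵥ x = μ • x) ↔ M.charpoly.IsRoot μ := by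
  rw [Polynomial.IsRoot, eval_charpoly, ← exists_mulVec_eq_zero_iff]
  refine exists_congr fun x => and_congr_right fun _ => ?_
  rw [sub_mulVec, scalar_apply, ← smul_one_eq_diagonal, smul_mulVec, one_mulVec, sub_eq_zero,
    eq_comm]

lemma specRad_eq_sSup_charpoly_roots (M : Matrix ι ι ℝ) :
    specRad M = sSup {v : ℝ | ∃ μ : ℂ,
      (M.map Complex.ofRealHom).charpoly.IsRoot μ ∧ v = ‖μ‖} := by
  simp only [specRad, ← exists_eigenvector_iff_isRoot_charpoly]
  congr 1
  ext v
  exact ⟨fun ⟨μ, x, hx, hμ, hv⟩ => ⟨μ, ⟨x, hx, hμ⟩, hv⟩,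
    fun ⟨μ, ⟨x, hx, hμ⟩, hv⟩ => ⟨μ, x, hx, hμ, hv⟩⟩

lemma specRad_mul_comm (A B : Matrix ι ι ℝ) : specRad (A * B) = specRad (B * A) := by
  simp only [specRad_eq_sSup_charpoly_roots, Matrix.map_mul, charpoly_mul_comm]

end SpectralRadius

section PivotLists

variable {n m : ℕ} {c : ℕ → ℕ} {α : Type*} {pr : α → ℕ × ℕ}

lemma AdjSwapG.perm {L L' : List α} (h : AdjSwapG pr L L') : L.Perm L' := by
  obtain ⟨l₁, l₂, a, b, -, rfl, rfl⟩ := h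
  exact (List.Perm.swap b a l₂).append_left l₁

lemma EquivG.perm {L L' : List α} (h : EquivG pr L L') : L.Perm L' := by
  induction h with
  | refl => rfl
  | tail _ hswap ih => exact ih.trans hswap.perm

lemma WeakG.perm {L L' : List α} (h : WeakG pr L L') : L.Perm L' := by
  induction h with
  | refl => rfl
  | tail _ hstep ih =>
    rcases hstep with hequiv | ⟨l₁, l₂, rfl, rfl⟩
    · exact ih.trans hequiv.perm
    · exact ih.trans List.perm_append_comm

lemma prodD_append (X Y : List ((ℕ × ℕ) × Matrix (OffI n m c) (OffI n m c) ℝ)) :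
    prodD (X ++ Y) = prodD Y * prodD X := by
  simp [prodD, List.prod_append]

lemma prodD_eq_of_adjSwapG {L L' : List ((ℕ × ℕ) × Matrix (OffI n m c) (OffI n m c) ℝ)}
    (hmem : ∀ e ∈ L, e.2 ∈ Iij n m c e.1.1 e.1.2) (h : AdjSwapG Prod.fst L L') :
    prodD L = prodD L' := by
  obtain ⟨l₁, l₂, a, b, hd, rfl, rfl⟩ := h
  obtain ⟨U, hU, -, ha⟩ := hmem a (by simp)
  obtain ⟨V, hV, -, hb⟩ := hmem b (by simp)
  have hcomm : a.2 * b.2 = b.2 * a.2 := by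
    rw [ha, hb]
    exact annih_comm (not_inPiv_and_inPiv hd) hU hV
  simp [prodD, List.prod_append, ← mul_assoc, hcomm]

lemma prodD_eq_of_equivG {L L' : List ((ℕ × ℕ) × Matrix (OffI n m c) (OffI n m c) ℝ)}
    (hmem : ∀ e ∈ L, e.2 ∈ Iij n m c e.1.1 e.1.2) (h : EquivG Prod.fst L L') :
    prodD L = prodD L' := by
  induction h with
  | refl => rfl
  | tail hLM hMN ih =>
    exact ih.trans (prodD_eq_of_adjSwapG (fun e he => hmem e ((EquivG.perm hLM).mem_iff.2 he)) hMN)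

lemma specRad_prodD_eq_of_shiftG
    {L L' : List ((ℕ × ℕ) × Matrix (OffI n m c) (OffI n m c) ℝ)} (h : ShiftG L L') :
    specRad (prodD L) = specRad (prodD L') := by
  obtain ⟨l₁, l₂, rfl, rfl⟩ := h
  rw [prodD_append, prodD_append, specRad_mul_comm]

end PivotLists

theorem statement16_general (n m : ℕ) (c : ℕ → ℕ)
    (L L' : List ((ℕ × ℕ) × Matrix (OffI n m c) (OffI n m c) ℝ))
    (hmem : ∀ e ∈ L, e.2 ∈ Iij n m c e.1.1 e.1.2) :
    (WeakG Prod.fst L L' → specRad (prodD L) = specRad (prodD L')) ∧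
    (EquivG Prod.fst L L' → prodD L = prodD L') := by
  refine ⟨fun hweak => ?_, prodD_eq_of_equivG hmem⟩
  induction hweak with
  | refl => rfl
  | tail hLM hMN ih =>
    rcases hMN with hequiv | hshift
    · rw [ih, prodD_eq_of_equivG (fun e he => hmem e ((WeakG.perm hLM).mem_iff.2 he)) hequiv]
    · exact ih.trans (specRad_prodD_eq_of_shiftG hshift)

/-- Lemma 2.15: let `L` be a pivot ordering decorated with block Jacobi
annihilators (each annihilator belonging to the class of its pair), `L'` a rearrangement
of the same decorated list obtained by a weak-equivalence chain. Then the spectral radii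
of the corresponding block Jacobi operators agree; and if the rearrangement uses only
admissible transpositions, the operators themselves coincide. -/
theorem statement16 (n m : ℕ) (c : ℕ → ℕ) (hpart : IsPartition n m c)
    (L L' : List ((ℕ × ℕ) × Matrix (OffI n m c) (OffI n m c) ℝ))
    (hseq : SeqOn m (L.map Prod.fst))
    (hmem : ∀ e ∈ L, e.2 ∈ Iij n m c e.1.1 e.1.2) :
    (WeakG Prod.fst L L' → specRad (prodD L) = specRad (prodD L')) ∧
    (EquivG Prod.fst L L' → prodD L = prodD L') :=
  statement16_general n m c L L' hmem
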